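/- arXiv:2307.06777 — 9 statements merged into one kernel-verified Lean document; each statement's English description precedes it below -/
import Mathlib

section
/- Suppose z·a₁·a₀ = b₁·b₀·z and z·u = v·z for words a₀,a₁,b₀,b₁,u,v,z, and suppose b₀·z is a suffix of a₀, i.e., a₀ = w·b₀·z for some word w. Then (a₀·u·a₁)·w = w·(b₀·v·b₁), i.e., w is an inner witness of (a₀·u·a₁, b₀·v·b₁). -/
theorem inner_witness_from_outer {α : Type*} (a₀ a₁ b₀ b₁ u v z w : FreeMonoid α)
    (h₁ : z * (a₁ * a₀) = (b₁ * b₀) * z)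
    (h₂ : z * u = v * z)
    (hw : a₀ = w * (b₀ * z)) :
    (a₀ * u * a₁) * w = w * (b₀ * v * b₁) := by
  subst hw
  have key : z * a₁ * w = b₁ := by
    have h : (z * a₁ * w * b₀) * z = (b₁ * b₀) * z := by
      simpa [mul_assoc] using h₁
    have h' : z * a₁ * w * b₀ = b₁ * b₀ := mul_right_cancel h
    exact mul_right_cancel h'
  calc (w * (b₀ * z) * u * a₁) * w
      = w * b₀ * (z * u) * (a₁ * w) := by simp [mul_assoc]
    _ = w * b₀ * (v * z) * (a₁ * w) := by rw [h₂]
    _ = w * b₀ * v * (z * a₁ * w) := by simp [mul_assoc]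
    _ = w * (b₀ * v * b₁) := by rw [key]; simp [mul_assoc]
end

section
/- Suppose a₁·a₀·z = z·b₁·b₀ and u·z = z·v for words a₀,a₁,b₀,b₁,u,v,z, and suppose b₀ is a suffix of a₀·z, i.e., a₀·z = w·b₀ for some word w. Then (a₀·u·a₁)·w = w·(b₀·v·b₁), i.e., w is an inner witness of (a₀·u·a₁, b₀·v·b₁). -/
theorem inner_witness_extend {α : Type*} (a₀ a₁ b₀ b₁ u v z w : FreeMonoid α)
    (h₁ : (a₁ * a₀) * z = z * (b₁ * b₀))
    (h₂ : u * z = z * v)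
    (hw : a₀ * z = w * b₀) :
    (a₀ * u * a₁) * w = w * (b₀ * v * b₁) := by
  have key : ((a₀ * u * a₁) * w) * b₀ = (w * (b₀ * v * b₁)) * b₀ := by
    calc ((a₀ * u * a₁) * w) * b₀ = a₀ * u * (a₁ * a₀ * z) := by
          rw [mul_assoc, mul_assoc a₁, ← hw]; simp [mul_assoc]
      _ = a₀ * (u * z) * (b₁ * b₀) := by rw [h₁]; simp [mul_assoc]
      _ = (a₀ * z) * (v * (b₁ * b₀)) := by rw [h₂]; simp [mul_assoc]
      _ = (w * (b₀ * v * b₁)) * b₀ := by rw [hw]; simp [mul_assoc]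
  exact mul_right_cancel key
end

section
/- Suppose a₁·a₀·z = z·b₁·b₀ and u·z = z·v for words a₀,a₁,b₀,b₁,u,v,z, and suppose a₀·z is a suffix of b₀, i.e., b₀ = w·a₀·z for some word w. Then w·(a₀·u·a₁) = (b₀·v·b₁)·w, i.e., w is an outer witness of (a₀·u·a₁, b₀·v·b₁). -/
theorem outer_witness_from_inner {α : Type*} (a₀ a₁ b₀ b₁ u v z w : FreeMonoid α)
    (h₁ : (a₁ * a₀) * z = z * (b₁ * b₀))
    (h₂ : u * z = z * v)
    (hw : b₀ = w * (a₀ * z)) :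
    w * (a₀ * u * a₁) = (b₀ * v * b₁) * w := by
  subst hw
  have key : a₁ = z * b₁ * w := by
    have h : (z * b₁ * w) * (a₀ * z) = a₁ * (a₀ * z) := by
      simpa [mul_assoc] using h₁.symm
    exact (mul_right_cancel h).symm
  calc w * (a₀ * u * a₁) = w * a₀ * (u * z) * b₁ * w := by
        rw [key]; simp [mul_assoc]
    _ = (w * (a₀ * z) * v * b₁) * w := by rw [h₂]; simp [mul_assoc]
end

section
/- Let (u,v) be a pair of nonempty words with u = (x·y)^k and v = (y·x)^k for some words x, y and k ≥ 1. If for some m ≥ 0 the equations a₀' = b₀·(y·x)^m·y and b₁ = (y·x)^m·y·a₁·a₀'' hold (where a₀ = a₀''·a₀'), then the word z = (y·x)^m·y satisfies both z·u = v·z and z·(a₁·a₀) = (b₁·b₀)·z; i.e., z is a common outer witness of (u,v) and (a₁·a₀, b₁·b₀). -/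
theorem common_outer_witness_case {α : Type*}
    (u v x y a₀ a₀' a₀'' a₁ b₀ b₁ : FreeMonoid α) (k m : ℕ)
    (hk : 1 ≤ k) (hu : u = (x * y) ^ k) (hv : v = (y * x) ^ k)
    (hune : u ≠ 1) (hvne : v ≠ 1)
    (ha₀ : a₀ = a₀'' * a₀')
    (h₁ : a₀' = b₀ * (y * x) ^ m * y)
    (h₂ : b₁ = (y * x) ^ m * y * a₁ * a₀'') :
    ((y * x) ^ m * y) * u = v * ((y * x) ^ m * y) ∧
    ((y * x) ^ m * y) * (a₁ * a₀) = (b₁ * b₀) * ((y * x) ^ m * y) := by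
  have hsemi : SemiconjBy y (x * y) (y * x) := by
    simp [SemiconjBy, mul_assoc]
  have hpow := hsemi.pow_right k
  constructor
  · rw [hu, hv, mul_assoc, hpow.eq, ← mul_assoc, ← mul_assoc]
    congr 1
    rw [← pow_add, ← pow_add, Nat.add_comm]
  · subst ha₀ h₁ h₂
    simp [mul_assoc]
end

section
/- Let u, v be nonempty conjugate words, say u = (x·y)^k and v = (y·x)^k with k ≥ 1, and suppose m ≥ 0 satisfies b₀ = a₀'·(x·y)^m·x and (x·y)^m·x·b₁ = a₁·a₀'' (where a₀ = a₀''·a₀'). Then z = (x·y)^m·x satisfies u·z = z·v and (a₁·a₀)·z = z·(b₁·b₀); i.e., z is a common inner witness of (u,v) and (a₁·a₀, b₁·b₀). -/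
theorem common_inner_witness_case {α : Type*}
    (u v x y a₀ a₀' a₀'' a₁ b₀ b₁ : FreeMonoid α) (k m : ℕ)
    (hk : 1 ≤ k) (hu : u = (x * y) ^ k) (hv : v = (y * x) ^ k)
    (hune : u ≠ 1) (hvne : v ≠ 1)
    (ha₀ : a₀ = a₀'' * a₀')
    (h₁ : b₀ = a₀' * (x * y) ^ m * x)
    (h₂ : (x * y) ^ m * x * b₁ = a₁ * a₀'') :
    u * ((x * y) ^ m * x) = ((x * y) ^ m * x) * v ∧
    (a₁ * a₀) * ((x * y) ^ m * x) = ((x * y) ^ m * x) * (b₁ * b₀) := by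
  have sc : ∀ n : ℕ, (x * y) ^ n * x = x * (y * x) ^ n := by
    intro n
    exact (SemiconjBy.pow_right (by simp [SemiconjBy, mul_assoc]) n).symm
  constructor
  · subst hu hv
    calc (x * y) ^ k * ((x * y) ^ m * x) = (x * y) ^ m * ((x * y) ^ k * x) := by
          rw [← mul_assoc, ← mul_assoc, ← pow_add, ← pow_add, Nat.add_comm]
      _ = (x * y) ^ m * x * (y * x) ^ k := by rw [sc, mul_assoc]
  · calc a₁ * a₀ * ((x * y) ^ m * x)
        = (a₁ * a₀'') * (a₀' * ((x * y) ^ m * x)) := by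
          rw [ha₀]; simp [mul_assoc]
      _ = (x * y) ^ m * x * (b₁ * b₀) := by
          rw [← h₂, h₁]; simp [mul_assoc]
end

section
/- If a word z is both an inner and an outer witness of a pair (u,v) (i.e., u·z = z·v and z·u = v·z), and u is nonempty, then u·z·u = u·u·z and hence z commutes with u; consequently u and v are conjugate via a witness that is a power of the primitive root of u, times a prefix. -/
open FreeMonoid

namespace InnerOuter

variable {α : Type*}

lemma length_pow (r : FreeMonoid α) (n : ℕ) : (r ^ n).length = n * r.length := by
  induction n with
  | zero => simp [FreeMonoid.length_one]
  | succ k ih => rw [pow_succ, FreeMonoid.length_mul, ih]; ring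

lemma split {x y a b : FreeMonoid α} (h : x * a = y * b)
    (hl : x.length ≤ y.length) : ∃ t, y = x * t := by
  have hx : x.toList <+: y.toList ++ b.toList := by
    rw [← FreeMonoid.toList_mul, ← h, FreeMonoid.toList_mul]
    exact ⟨a.toList, rfl⟩
  have hy : y.toList <+: y.toList ++ b.toList := ⟨b.toList, rfl⟩
  obtain ⟨t, ht⟩ := List.prefix_of_prefix_length_le hx hy hl
  exact ⟨ofList t, FreeMonoid.toList.injective (by rw [FreeMonoid.toList_mul, ← ht]; rfl)⟩

lemma centralizer_cyclic (w : FreeMonoid α) (hw : w ≠ 1) :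
    ∃ r₀ : FreeMonoid α, r₀ ≠ 1 ∧ r₀ * w = w * r₀ ∧
      (∀ s : FreeMonoid α, s ≠ 1 → s * w = w * s → r₀.length ≤ s.length) ∧
      (∀ x : FreeMonoid α, x * w = w * x → ∃ n, x = r₀ ^ n) := by
  classical
  have hex : ∃ n : ℕ, ∃ s : FreeMonoid α, s.length = n ∧ s ≠ 1 ∧ s * w = w * s :=
    ⟨w.length, w, rfl, hw, rfl⟩
  obtain ⟨r₀, hlen, hr0ne, hr0c⟩ := Nat.find_spec hex
  have hmin : ∀ s : FreeMonoid α, s ≠ 1 → s * w = w * s → r₀.length ≤ s.length := by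
    intro s hs hsc
    rw [hlen]
    exact Nat.find_le ⟨s, rfl, hs, hsc⟩
  refine ⟨r₀, hr0ne, hr0c, hmin, ?_⟩
  have hwlen : 1 ≤ w.length :=
    Nat.pos_of_ne_zero (fun h => hw (FreeMonoid.length_eq_zero.mp h))
  -- any commuter is a prefix of a big power of w
  have hpref : ∀ (x : FreeMonoid α) (N : ℕ), x * w = w * x → x.length ≤ N →
      ∃ t, w ^ N * w = x * t := by
    intro x N hx hxN
    have hc : Commute x w := hx
    have hc' : x * (w ^ N * w) = (w ^ N * w) * x := (hc.pow_right N).mul_right hc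
    have hl : x.length ≤ (w ^ N * w).length := by
      rw [FreeMonoid.length_mul, length_pow]
      nlinarith
    exact split hc' hl
  have main : ∀ m : ℕ, ∀ x : FreeMonoid α, x.length ≤ m → x * w = w * x →
      ∃ n, x = r₀ ^ n := by
    intro m
    induction m with
    | zero =>
      intro x hxm _
      exact ⟨0, by rw [pow_zero]; exact FreeMonoid.length_eq_zero.mp (Nat.le_zero.mp hxm)⟩
    | succ k ih =>
      intro x hxm hxc
      by_cases hx1 : x = 1
      · exact ⟨0, by rw [pow_zero, hx1]⟩
      · have hr0x : r₀.length ≤ x.length := hmin x hx1 hxc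
        set N := x.length with hNdef
        obtain ⟨t, ht⟩ := hpref x N hxc le_rfl
        obtain ⟨t', ht'⟩ := hpref r₀ N hr0c (le_trans hr0x le_rfl)
        -- r₀ is a prefix of x
        obtain ⟨x', hx'⟩ := split (ht'.symm.trans ht) hr0x
        have hx'c : x' * w = w * x' := by
          have h2 : r₀ * (x' * w) = r₀ * (w * x') := by
            calc r₀ * (x' * w) = (r₀ * x') * w := by rw [mul_assoc]
              _ = w * (r₀ * x') := by rw [← hx', hxc]
              _ = (w * r₀) * x' := by rw [mul_assoc]
              _ = r₀ * (w * x') := by rw [← hr0c, mul_assoc]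
          exact mul_left_cancel h2
        have hr0pos : 1 ≤ r₀.length :=
          Nat.pos_of_ne_zero (fun h => hr0ne (FreeMonoid.length_eq_zero.mp h))
        have hx'len : x'.length ≤ k := by
          have := congrArg FreeMonoid.length hx'
          rw [FreeMonoid.length_mul] at this
          omega
        obtain ⟨n, hn⟩ := ih x' hx'len hx'c
        exact ⟨n + 1, by rw [hx', hn, pow_succ']⟩
  intro x hx
  exact main x.length x le_rfl hx

end InnerOuter

/-- `r` is the primitive root of `u`: `u` is a positive power of `r`,
and `r` is shortest among words of which `u` is a positive power. -/
def IsPrimRoot {α : Type*} (r u : FreeMonoid α) : Prop :=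
  (∃ k : ℕ, 1 ≤ k ∧ u = r ^ k) ∧
  ∀ s : FreeMonoid α, (∃ k : ℕ, 1 ≤ k ∧ u = s ^ k) → r.length ≤ s.length

theorem inner_and_outer_witness {α : Type*} (u v z : FreeMonoid α)
    (hu : u ≠ 1) (hin : u * z = z * v) (hout : z * u = v * z) :
    u * z * u = u * u * z ∧ z * u = u * z ∧
    ∀ r : FreeMonoid α, IsPrimRoot r u →
      ∃ (n : ℕ) (p s : FreeMonoid α), r = p * s ∧ z = r ^ n * p := by
  -- first, z commutes with u
  have hcomm : z * u = u * z := by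
    by_cases hz : z = 1
    · simp [hz]
    · -- u commutes with z², then apply centralizer of z²
      have hz2 : u * (z * z) = (z * z) * u := by
        calc u * (z * z) = (u * z) * z := by rw [mul_assoc]
          _ = z * (v * z) := by rw [hin, mul_assoc]
          _ = z * (z * u) := by rw [hout]
          _ = (z * z) * u := by rw [mul_assoc]
      have hz2ne : z * z ≠ 1 := by
        intro h
        have := congrArg FreeMonoid.length h
        rw [FreeMonoid.length_mul, FreeMonoid.length_one] at this
        exact hz (FreeMonoid.length_eq_zero.mp (by omega))
      obtain ⟨r₀, _, _, _, hall⟩ := InnerOuter.centralizer_cyclic (z * z) hz2ne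
      obtain ⟨a, ha⟩ := hall u hz2
      obtain ⟨b, hb⟩ := hall z (by rw [mul_assoc, ← mul_assoc])
      rw [ha, hb, ← pow_add, ← pow_add, Nat.add_comm]
  refine ⟨by rw [mul_assoc, hcomm, ← mul_assoc], hcomm, ?_⟩
  intro r hr
  obtain ⟨r₀, hr0ne, hr0c, hmin0, hall⟩ := InnerOuter.centralizer_cyclic u hu
  obtain ⟨⟨k, hk1, hk⟩, hrmin⟩ := hr
  have hrc : r * u = u * r := by rw [hk, ← pow_succ', ← pow_succ]
  obtain ⟨e, he⟩ := hall r hrc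
  -- u is a positive power of r₀
  obtain ⟨a, hau⟩ := hall u rfl
  have ha1 : 1 ≤ a := by
    rcases Nat.eq_zero_or_pos a with h | h
    · exact absurd (by rw [hau, h, pow_zero]) hu
    · exact h
  have hrlen : r.length ≤ r₀.length := hrmin r₀ ⟨a, ha1, hau⟩
  have hrne : r ≠ 1 := by
    intro h
    exact hu (by rw [hk, h, one_pow])
  have he1 : 1 ≤ e := by
    rcases Nat.eq_zero_or_pos e with h | h
    · exact absurd (by rw [he, h, pow_zero]) hrne
    · exact h
  have hr0pos : 1 ≤ r₀.length :=
    Nat.pos_of_ne_zero (fun h => hr0ne (FreeMonoid.length_eq_zero.mp h))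
  have hee : e = 1 := by
    have := congrArg FreeMonoid.length he
    rw [InnerOuter.length_pow] at this
    nlinarith
  have hr0 : r = r₀ := by rw [he, hee, pow_one]
  obtain ⟨n, hn⟩ := hall z hcomm
  exact ⟨n, 1, r, by rw [one_mul], by rw [hn, hr0, mul_one]⟩
end

section
/- Let a₀,b₀,a₁,b₁,u,v be words with u,v nonempty and conjugate. If for some n with n·|u| ≥ |a₀| + |a₁| + |b₀| + |b₁| the words a₀·u^{4n}·a₁ and b₀·v^{4n}·b₁ are conjugate, then there exists a word z that is a common witness of (u,v) and (a₁·a₀, b₁·b₀); that is, either (u·z = z·v and a₁·a₀·z = z·b₁·b₀) or (z·u = v·z and z·a₁·a₀ = b₁·b₀·z). -/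
private lemma fm_length_pow {α : Type*} (u : FreeMonoid α) (k : ℕ) :
    (u ^ k).length = k * u.length := by
  induction k with
  | zero => simp
  | succ k ih =>
      rw [pow_succ, FreeMonoid.length_mul, ih]
      ring

private lemma fm_split {α : Type*} {x x' y y' : FreeMonoid α}
    (h : x * x' = y * y') (hl : x.length ≤ y.length) :
    ∃ z : FreeMonoid α, y = x * z ∧ x' = z * y' := by
  have h' : FreeMonoid.toList x ++ FreeMonoid.toList x'
      = FreeMonoid.toList y ++ FreeMonoid.toList y' := by
    rw [← FreeMonoid.toList_mul, ← FreeMonoid.toList_mul, h]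
  rcases List.append_eq_append_iff.1 h' with ⟨a, ha1, ha2⟩ | ⟨c, hc1, hc2⟩
  · refine ⟨FreeMonoid.ofList a, ?_, ?_⟩
    · apply FreeMonoid.toList.injective
      simpa [FreeMonoid.toList_mul] using ha1
    · apply FreeMonoid.toList.injective
      simpa [FreeMonoid.toList_mul] using ha2
  · have hlen : (FreeMonoid.toList x).length = (FreeMonoid.toList y).length + c.length := by
      rw [hc1, List.length_append]
    have hc0 : c = [] := by
      have : x.length = x.toList.length := rfl
      have : y.length = y.toList.length := rfl
      have : c.length = 0 := by
        have hx : x.length = x.toList.length := rfl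
        have hy : y.length = y.toList.length := rfl
        omega
      exact List.length_eq_zero_iff.1 this
  -- with c = [], x = y and y' = x'
    subst hc0
    refine ⟨1, ?_, ?_⟩
    · apply FreeMonoid.toList.injective
      simpa [FreeMonoid.toList_mul] using hc1.symm
    · apply FreeMonoid.toList.injective
      simpa [FreeMonoid.toList_mul] using hc2.symm

private lemma fm_pow_comm {α : Type*} {u v z : FreeMonoid α} (h : u * z = z * v) (k : ℕ) :
    u ^ k * z = z * v ^ k := by
  induction k with
  | zero => simp
  | succ k ih =>
      rw [pow_succ', mul_assoc, ih, ← mul_assoc, h, mul_assoc, ← pow_succ']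

/-- Core lemma: one-sided conjugation equation with the short witness on the left. -/
private lemma fm_core {α : Type*} (a₀ a₁ b₀ b₁ u v p : FreeMonoid α) (n : ℕ)
    (hn1 : 1 ≤ n) (hu : u ≠ 1) (hL : v.length = u.length)
    (hm : a₀.length + a₁.length + b₀.length + b₁.length ≤ n * u.length)
    (hp : 2 * p.length ≤ a₀.length + a₁.length + 4 * n * u.length)
    (heq : a₀ * u ^ (4 * n) * a₁ * p = p * b₀ * v ^ (4 * n) * b₁) :
    ∃ z : FreeMonoid α,
      (u * z = z * v ∧ (a₁ * a₀) * z = z * (b₁ * b₀)) ∨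
      (z * u = v * z ∧ z * (a₁ * a₀) = (b₁ * b₀) * z) := by
  set L := u.length with hLdef
  have hL1 : 1 ≤ L :=
    Nat.pos_of_ne_zero (fun h0 => hu (FreeMonoid.length_eq_zero.1 h0))
  have hLK : L ≤ n * L := Nat.le_mul_of_pos_left L hn1
  -- 4*n = (4*n-1) + 1
  obtain ⟨j, hj⟩ : ∃ j, 4 * n = j + 1 := ⟨4 * n - 1, by omega⟩
  have hjL : j * L + L = 4 * n * L := by
    have : (j + 1) * L = j * L + L := by ring
    rw [← this, ← hj]
  by_cases hcase : a₀.length ≤ p.length + b₀.length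
  · -- inner case
    have heq1 : a₀ * (u ^ (4 * n) * (a₁ * p)) = (p * b₀) * (v ^ (4 * n) * b₁) := by
      simpa only [mul_assoc] using heq
    obtain ⟨z, hz1, hz2⟩ := fm_split heq1 (by rw [FreeMonoid.length_mul]; exact hcase)
    have hzlen : a₀.length + z.length = p.length + b₀.length := by
      have := congrArg FreeMonoid.length hz1
      rw [FreeMonoid.length_mul, FreeMonoid.length_mul] at this
      omega
    have hzle : z.length ≤ j * L := by
      have h4 : 4 * n * L = 4 * (n * L) := by ring
      omega
    -- z is a prefix of u ^ j
    have heq2 : u ^ j * (u * (a₁ * p)) = z * (v ^ (4 * n) * b₁) := by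
      rw [← hz2, ← mul_assoc, ← pow_succ, ← hj]
    obtain ⟨w, hw1, _⟩ := fm_split heq2.symm (by rw [fm_length_pow]; exact hzle)
    -- now u * z = z * v
    have heq3 : (u * z) * (w * (a₁ * p)) = (z * v) * (v ^ j * b₁) := by
      have : u ^ (4 * n) * (a₁ * p) = z * (v ^ (4 * n) * b₁) := hz2
      rw [hj, pow_succ', hw1] at this
      calc (u * z) * (w * (a₁ * p)) = u * (z * w) * (a₁ * p) := by simp [mul_assoc]
        _ = z * (v ^ (j + 1) * b₁) := this
        _ = (z * v) * (v ^ j * b₁) := by rw [pow_succ']; simp [mul_assoc]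
    have hlen_uz : (u * z).length ≤ (z * v).length := by
      simp [FreeMonoid.length_mul, hL]; omega
    obtain ⟨e, he1, _⟩ := fm_split heq3 hlen_uz
    have he0 : e = 1 := by
      have := congrArg FreeMonoid.length he1
      simp [FreeMonoid.length_mul, hL] at this
      exact FreeMonoid.length_eq_zero.1 (by omega)
    have huz : u * z = z * v := by rw [he1, he0, mul_one]
    -- finish: a₁ * p = z * b₁
    have hcancel : u ^ (4 * n) * (a₁ * p) = u ^ (4 * n) * (z * b₁) := by
      rw [hz2, ← mul_assoc, ← fm_pow_comm huz (4 * n), mul_assoc]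
    have hap : a₁ * p = z * b₁ := mul_left_cancel hcancel
    refine ⟨z, Or.inl ⟨huz, ?_⟩⟩
    calc (a₁ * a₀) * z = a₁ * (a₀ * z) := by rw [mul_assoc]
      _ = a₁ * (p * b₀) := by rw [← hz1]
      _ = (a₁ * p) * b₀ := by rw [mul_assoc]
      _ = (z * b₁) * b₀ := by rw [hap]
      _ = z * (b₁ * b₀) := by rw [mul_assoc]
  · -- outer case
    push_neg at hcase
    have heq1 : (p * b₀) * (v ^ (4 * n) * b₁) = a₀ * (u ^ (4 * n) * (a₁ * p)) := by
      simpa only [mul_assoc] using heq.symm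
    obtain ⟨z, hz1, hz2⟩ := fm_split heq1
      (by rw [FreeMonoid.length_mul]; omega)
    have hzlen : p.length + b₀.length + z.length = a₀.length := by
      have := congrArg FreeMonoid.length hz1
      simp only [FreeMonoid.length_mul] at this
      omega
    have hzle : z.length ≤ j * L := by
      have h4 : 4 * n * L = 4 * (n * L) := by ring
      omega
    -- z is a prefix of v ^ j
    have hvsplit : v ^ (4 * n) = v ^ j * v := by rw [hj, pow_succ]
    have heq2 : v ^ j * (v * b₁) = z * (u ^ (4 * n) * (a₁ * p)) := by
      rw [← hz2, hvsplit, mul_assoc]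
    obtain ⟨w, hw1, _⟩ := fm_split heq2.symm (by rw [fm_length_pow, hL]; omega)
    have heq3 : (z * u) * (u ^ j * (a₁ * p)) = (v * z) * (w * b₁) := by
      have h5 : v ^ (4 * n) * b₁ = z * (u ^ (4 * n) * (a₁ * p)) := hz2
      rw [hj, pow_succ'] at h5
      calc (z * u) * (u ^ j * (a₁ * p)) = z * (u ^ (j + 1) * (a₁ * p)) := by
            rw [pow_succ']; simp [mul_assoc]
        _ = v ^ (4 * n) * b₁ := by rw [← h5, hj, pow_succ']
        _ = v * (z * w) * b₁ := by rw [hj, pow_succ', hw1]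
        _ = (v * z) * (w * b₁) := by simp [mul_assoc]
    have hlen_zu : (z * u).length ≤ (v * z).length := by
      simp [FreeMonoid.length_mul, hL]; omega
    obtain ⟨e, he1, _⟩ := fm_split heq3 hlen_zu
    have he0 : e = 1 := by
      have := congrArg FreeMonoid.length he1
      simp [FreeMonoid.length_mul, hL] at this
      exact FreeMonoid.length_eq_zero.1 (by omega)
    have hzu : z * u = v * z := by rw [he1, he0, mul_one]
    -- finish: b₁ = z * (a₁ * p)
    have hzp : z * u ^ (4 * n) = v ^ (4 * n) * z := (fm_pow_comm hzu.symm (4 * n)).symm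
    have hcancel : (p * b₀) * (v ^ (4 * n) * b₁) = (p * b₀) * (v ^ (4 * n) * (z * (a₁ * p))) := by
      calc (p * b₀) * (v ^ (4 * n) * b₁) = (p * b₀ * z) * (u ^ (4 * n) * (a₁ * p)) := by
            rw [← hz1]; exact heq1
        _ = (p * b₀) * ((z * u ^ (4 * n)) * (a₁ * p)) := by simp [mul_assoc]
        _ = (p * b₀) * ((v ^ (4 * n) * z) * (a₁ * p)) := by rw [hzp]
        _ = (p * b₀) * (v ^ (4 * n) * (z * (a₁ * p))) := by simp [mul_assoc]
    have hb : b₁ = z * (a₁ * p) := mul_left_cancel (mul_left_cancel hcancel)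
    refine ⟨z, Or.inr ⟨hzu, ?_⟩⟩
    calc z * (a₁ * a₀) = z * (a₁ * (p * b₀ * z)) := by rw [← hz1]
      _ = (z * (a₁ * p)) * (b₀ * z) := by simp [mul_assoc]
      _ = b₁ * (b₀ * z) := by rw [← hb]
      _ = (b₁ * b₀) * z := by rw [mul_assoc]

theorem singleton_cut_common_witness {α : Type*}
    (a₀ a₁ b₀ b₁ u v : FreeMonoid α) (n : ℕ)
    (hu : u ≠ 1) (hv : v ≠ 1)
    (hconj : ∃ x y : FreeMonoid α, u = x * y ∧ v = y * x)
    (hn : a₀.length + a₁.length + b₀.length + b₁.length ≤ n * u.length)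
    (hpair : ∃ p q : FreeMonoid α,
      a₀ * u ^ (4 * n) * a₁ = p * q ∧ b₀ * v ^ (4 * n) * b₁ = q * p) :
    ∃ z : FreeMonoid α,
      (u * z = z * v ∧ (a₁ * a₀) * z = z * (b₁ * b₀)) ∨
      (z * u = v * z ∧ z * (a₁ * a₀) = (b₁ * b₀) * z) := by
  obtain ⟨x, y, hxy, hyx⟩ := hconj
  have hL : v.length = u.length := by
    rw [hxy, hyx, FreeMonoid.length_mul, FreeMonoid.length_mul]; omega
  rcases Nat.eq_zero_or_pos n with hn0 | hn1
  · -- n = 0 : all side words are trivial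
    subst hn0
    simp only [Nat.zero_mul] at hn
    have ha₀ : a₀ = 1 := FreeMonoid.length_eq_zero.1 (by omega)
    have ha₁ : a₁ = 1 := FreeMonoid.length_eq_zero.1 (by omega)
    have hb₀ : b₀ = 1 := FreeMonoid.length_eq_zero.1 (by omega)
    have hb₁ : b₁ = 1 := FreeMonoid.length_eq_zero.1 (by omega)
    refine ⟨x, Or.inl ⟨?_, by simp [ha₀, ha₁, hb₀, hb₁]⟩⟩
    rw [hxy, hyx, mul_assoc]
  · obtain ⟨p, q, hA, hB⟩ := hpair
    have hlenA : a₀.length + 4 * n * u.length + a₁.length = p.length + q.length := by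
      have := congrArg FreeMonoid.length hA
      simp only [FreeMonoid.length_mul, fm_length_pow] at this
      omega
    have hlenB : b₀.length + 4 * n * u.length + b₁.length = q.length + p.length := by
      have := congrArg FreeMonoid.length hB
      simp only [FreeMonoid.length_mul, fm_length_pow, hL] at this
      omega
    have heqA : a₀ * u ^ (4 * n) * a₁ * p = p * b₀ * v ^ (4 * n) * b₁ := by
      calc a₀ * u ^ (4 * n) * a₁ * p = (p * q) * p := by rw [hA]
        _ = p * (q * p) := by rw [mul_assoc]
        _ = p * (b₀ * v ^ (4 * n) * b₁) := by rw [← hB]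
        _ = p * b₀ * v ^ (4 * n) * b₁ := by simp [mul_assoc]
    have heqB : b₀ * v ^ (4 * n) * b₁ * q = q * a₀ * u ^ (4 * n) * a₁ := by
      calc b₀ * v ^ (4 * n) * b₁ * q = (q * p) * q := by rw [hB]
        _ = q * (p * q) := by rw [mul_assoc]
        _ = q * (a₀ * u ^ (4 * n) * a₁) := by rw [← hA]
        _ = q * a₀ * u ^ (4 * n) * a₁ := by simp [mul_assoc]
    by_cases hpq : p.length ≤ q.length
    · exact fm_core a₀ a₁ b₀ b₁ u v p n hn1 hu hL hn (by omega) heqA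
    · have hu' : v ≠ 1 := hv
      have hres := fm_core b₀ b₁ a₀ a₁ v u q n hn1 hv
        (by omega) (by rw [hL]; omega)
        (by rw [hL]; omega) heqB
      obtain ⟨z, hz⟩ := hres
      refine ⟨z, ?_⟩
      rcases hz with ⟨h1, h2⟩ | ⟨h1, h2⟩
      · exact Or.inr ⟨h1.symm, h2.symm⟩
      · exact Or.inl ⟨h1.symm, h2.symm⟩
end

section
/- Suppose z' satisfies a₁·a₀·z' = z'·b₁·b₀ and for all (u,v) in a set G of word pairs, u·z' = z'·v. Then there exists a single word z such that, letting (u,v) range over the pairs generated by concatenations of pairs from G (including the empty pair), either (a₀·u·a₁)·z = z·(b₀·v·b₁) for all such (u,v), or z·(a₀·u·a₁) = (b₀·v·b₁)·z for all such (u,v). In particular every pair (a₀·u·a₁, b₀·v·b₁) with (u,v) in the submonoid generated by G is conjugate. -/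
private theorem list_conj_aux {α : Type*} :
    ∀ (n : ℕ) (z A B : List α), z.length ≤ n → A ++ z = z ++ B →
      ∃ x y : List α, A = x ++ y ∧ B = y ++ x := by
  intro n
  induction n with
  | zero =>
    intro z A B hn h
    have hz : z = [] := List.length_eq_zero_iff.mp (Nat.le_zero.mp hn)
    subst hz
    simp at h
    exact ⟨A, [], by simp, by simp [h]⟩
  | succ n ih =>
    intro z A B hn h
    rcases A with _ | ⟨a, A'⟩
    · simp at h
      exact ⟨[], [], by simp, by simp [← h]⟩
    by_cases hl : z.length ≤ (a :: A').length
    · have hz : z <+: (a :: A') := by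
        have h1 : z <+: (a :: A') ++ z := by rw [h]; exact ⟨B, rfl⟩
        exact (List.isPrefix_append_of_length hl).mp h1
      obtain ⟨y, hy⟩ := hz
      refine ⟨z, y, hy.symm, ?_⟩
      have h2 : z ++ (y ++ z) = z ++ B := by
        rw [← List.append_assoc, hy, h]
      exact (List.append_cancel_left h2).symm
    · push_neg at hl
      have hz : (a :: A') <+: z := by
        have h1 : (a :: A') <+: z ++ B := by rw [← h]; exact ⟨z, rfl⟩
        exact (List.isPrefix_append_of_length (le_of_lt hl)).mp h1
      obtain ⟨z₁, hz₁⟩ := hz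
      have hlen : z₁.length ≤ n := by
        have : z.length = (a :: A').length + z₁.length := by
          rw [← hz₁]; simp; omega
        simp only [List.length_cons] at this
        omega
      apply ih z₁ (a :: A') B hlen
      have h2 : (a :: A') ++ ((a :: A') ++ z₁) = (a :: A') ++ (z₁ ++ B) := by
        rw [hz₁, h, ← hz₁, List.append_assoc]
      exact List.append_cancel_left h2

private theorem fm_conj {α : Type*} (A B z : FreeMonoid α) (h : A * z = z * B) :
    ∃ x y : FreeMonoid α, A = x * y ∧ B = y * x := by
  obtain ⟨x, y, hx, hy⟩ := list_conj_aux z.toList.length z.toList A.toList B.toList le_rfl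
    (by simpa [FreeMonoid.toList_mul] using congrArg FreeMonoid.toList h)
  refine ⟨FreeMonoid.ofList x, FreeMonoid.ofList y, ?_, ?_⟩
  · apply FreeMonoid.toList.injective; simpa [FreeMonoid.toList_mul] using hx
  · apply FreeMonoid.toList.injective; simpa [FreeMonoid.toList_mul] using hy

private theorem fm_split_s15 {α : Type*} (a b c d : FreeMonoid α) (h : a * b = c * d) :
    (∃ e : FreeMonoid α, c = a * e ∧ b = e * d) ∨
    (∃ e : FreeMonoid α, a = c * e ∧ d = e * b) := by
  have h' : a.toList ++ b.toList = c.toList ++ d.toList := by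
    simpa [FreeMonoid.toList_mul] using congrArg FreeMonoid.toList h
  rcases List.append_eq_append_iff.mp h' with ⟨e, h1, h2⟩ | ⟨e, h1, h2⟩
  · left
    refine ⟨FreeMonoid.ofList e, ?_, ?_⟩
    · apply FreeMonoid.toList.injective; simpa [FreeMonoid.toList_mul] using h1
    · apply FreeMonoid.toList.injective; simpa [FreeMonoid.toList_mul] using h2
  · right
    refine ⟨FreeMonoid.ofList e, ?_, ?_⟩
    · apply FreeMonoid.toList.injective; simpa [FreeMonoid.toList_mul] using h1
    · apply FreeMonoid.toList.injective; simpa [FreeMonoid.toList_mul] using h2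

theorem common_witness_of_inner {α : Type*}
    (G : Set (FreeMonoid α × FreeMonoid α)) (a₀ a₁ b₀ b₁ z' : FreeMonoid α)
    (h₁ : (a₁ * a₀) * z' = z' * (b₁ * b₀))
    (h₂ : ∀ p ∈ G, p.1 * z' = z' * p.2) :
    (∃ z : FreeMonoid α,
      (∀ p ∈ Submonoid.closure G, (a₀ * p.1 * a₁) * z = z * (b₀ * p.2 * b₁)) ∨
      (∀ p ∈ Submonoid.closure G, z * (a₀ * p.1 * a₁) = (b₀ * p.2 * b₁) * z)) ∧
    ∀ p ∈ Submonoid.closure G,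
      ∃ x y : FreeMonoid α, a₀ * p.1 * a₁ = x * y ∧ b₀ * p.2 * b₁ = y * x := by
  -- every pair in the closure has z' as an inner witness
  have hclos : ∀ p ∈ Submonoid.closure G, p.1 * z' = z' * p.2 := by
    intro p hp
    induction hp using Submonoid.closure_induction with
    | mem q hq => exact h₂ q hq
    | one => simp
    | mul q r _ _ hq hr =>
      calc (q * r).1 * z' = q.1 * (r.1 * z') := by
            simp [Prod.fst_mul, mul_assoc]
        _ = q.1 * (z' * r.2) := by rw [hr]
        _ = (q.1 * z') * r.2 := by rw [mul_assoc]
        _ = (z' * q.2) * r.2 := by rw [hq]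
        _ = z' * (q * r).2 := by simp [Prod.snd_mul, mul_assoc]
  have key : ∀ u v : FreeMonoid α, u * z' = z' * v →
      (a₀ * u * a₁) * (a₀ * z') = (a₀ * z') * (v * (b₁ * b₀)) := by
    intro u v h
    calc (a₀ * u * a₁) * (a₀ * z') = a₀ * u * ((a₁ * a₀) * z') := by
          simp [mul_assoc]
      _ = a₀ * u * (z' * (b₁ * b₀)) := by rw [h₁]
      _ = a₀ * ((u * z') * (b₁ * b₀)) := by simp [mul_assoc]
      _ = a₀ * ((z' * v) * (b₁ * b₀)) := by rw [h]
      _ = (a₀ * z') * (v * (b₁ * b₀)) := by simp [mul_assoc]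
  -- dichotomy from the unit case
  have base : (a₀ * a₁) * (a₀ * z') = ((a₀ * z') * b₁) * b₀ := by
    have := key 1 1 (by simp)
    simpa [mul_assoc] using this
  rcases fm_split_s15 (a₀ * a₁) (a₀ * z') ((a₀ * z') * b₁) b₀ base with ⟨e, _, h2⟩ | ⟨e, _, h2⟩
  · -- a₀ * z' = e * b₀ : inner witness e
    have inner : ∀ p ∈ Submonoid.closure G, (a₀ * p.1 * a₁) * e = e * (b₀ * p.2 * b₁) := by
      intro p hp
      have hk := key p.1 p.2 (hclos p hp)
      rw [h2] at hk
      have hk' : ((a₀ * p.1 * a₁) * e) * b₀ = (e * (b₀ * p.2 * b₁)) * b₀ := by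
        calc ((a₀ * p.1 * a₁) * e) * b₀ = (a₀ * p.1 * a₁) * (e * b₀) := by
              rw [mul_assoc]
          _ = (e * b₀) * (p.2 * (b₁ * b₀)) := hk
          _ = (e * (b₀ * p.2 * b₁)) * b₀ := by simp [mul_assoc]
      exact mul_right_cancel hk'
    refine ⟨⟨e, Or.inl inner⟩, ?_⟩
    intro p hp
    exact fm_conj _ _ _ (inner p hp)
  · -- b₀ = e * (a₀ * z') : outer witness e
    have ha₁ : a₁ = z' * b₁ * e := by
      have h3 : (a₁ * a₀) * z' = ((z' * b₁ * e) * a₀) * z' := by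
        rw [h₁, h2]; simp [mul_assoc]
      have h4 : a₁ * a₀ = (z' * b₁ * e) * a₀ := mul_right_cancel h3
      exact mul_right_cancel h4
    have outer : ∀ p ∈ Submonoid.closure G, e * (a₀ * p.1 * a₁) = (b₀ * p.2 * b₁) * e := by
      intro p hp
      have hz := hclos p hp
      calc e * (a₀ * p.1 * a₁) = e * a₀ * (p.1 * z') * (b₁ * e) := by
            rw [ha₁]; simp [mul_assoc]
        _ = e * a₀ * (z' * p.2) * (b₁ * e) := by rw [hz]
        _ = (e * (a₀ * z')) * p.2 * b₁ * e := by simp [mul_assoc]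
        _ = (b₀ * p.2 * b₁) * e := by rw [← h2]
    refine ⟨⟨e, Or.inr outer⟩, ?_⟩
    intro p hp
    obtain ⟨x, y, hx, hy⟩ := fm_conj _ _ _ (outer p hp).symm
    exact ⟨y, x, hy, hx⟩
end

section
/- Let M be the set of pairs of words of the form (a₀·u₁·a₁·u₂·a₂, b₀·v₁·b₁·v₂·b₂) where (u₁,v₁) ranges over a submonoid G₁* and (u₂,v₂) over a submonoid G₂*. If z is a common inner witness of both singleton reductions M₁ = {(a₀·u₁·a₁·a₂, b₀·v₁·b₁·b₂) : (u₁,v₁) ∈ G₁*} and M₂ = {(a₀·a₁·u₂·a₂, b₀·b₁·v₂·b₂) : (u₂,v₂) ∈ G₂*}, and additionally z arises (as in the single-star case) from common inner witnesses z₁ of G₁ ∪ {(a₁·a₂·a₀, b₁·b₂·b₀)} and z₂ of G₂ ∪ {(a₂·a₀·a₁, b₂·b₀·b₁)} via z = (a₁·a₂)⁻¹·z₁·(b₁·b₂) = a₂⁻¹·z₂·b₂, then z is a common inner witness of all of M: for all (u₁,v₁) ∈ G₁* and (u₂,v₂) ∈ G₂*, (a₀·u₁·a₁·u₂·a₂)·z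 = z·(b₀·v₁·b₁·v₂·b₂). -/
theorem two_star_common_inner_witness {α : Type*}
    (G₁ G₂ : Set (FreeMonoid α × FreeMonoid α))
    (a₀ a₁ a₂ b₀ b₁ b₂ z z₁ z₂ : FreeMonoid α)
    (hG₁ : ∀ p ∈ Submonoid.closure G₁, p.1 * z₁ = z₁ * p.2)
    (hz₁ : (a₁ * a₂ * a₀) * z₁ = z₁ * (b₁ * b₂ * b₀))
    (hG₂ : ∀ p ∈ Submonoid.closure G₂, p.1 * z₂ = z₂ * p.2)
    (hz₂ : (a₂ * a₀ * a₁) * z₂ = z₂ * (b₂ * b₀ * b₁))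
    (hM₁ : ∀ p ∈ Submonoid.closure G₁,
      (a₀ * p.1 * a₁ * a₂) * z = z * (b₀ * p.2 * b₁ * b₂))
    (hM₂ : ∀ p ∈ Submonoid.closure G₂,
      (a₀ * a₁ * p.1 * a₂) * z = z * (b₀ * b₁ * p.2 * b₂))
    (hfac₁ : a₁ * a₂ * z = z₁ * (b₁ * b₂))
    (hfac₂ : a₂ * z = z₂ * b₂) :
    ∀ p ∈ Submonoid.closure G₁, ∀ q ∈ Submonoid.closure G₂,
      (a₀ * p.1 * a₁ * q.1 * a₂) * z = z * (b₀ * p.2 * b₁ * q.2 * b₂) := by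
  intro p hp q hq
  have h1 := hM₁ p hp
  have h2 := hG₂ q hq
  have key : a₀ * p.1 * a₁ * z₂ = z * (b₀ * p.2 * b₁) := by
    apply mul_right_cancel (b := b₂)
    calc a₀ * p.1 * a₁ * z₂ * b₂ = a₀ * p.1 * a₁ * (a₂ * z) := by
          rw [hfac₂]; simp [mul_assoc]
      _ = (a₀ * p.1 * a₁ * a₂) * z := by simp [mul_assoc]
      _ = z * (b₀ * p.2 * b₁ * b₂) := h1
      _ = z * (b₀ * p.2 * b₁) * b₂ := by simp [mul_assoc]
  calc (a₀ * p.1 * a₁ * q.1 * a₂) * z = a₀ * p.1 * a₁ * (q.1 * (a₂ * z)) := by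
        simp [mul_assoc]
    _ = a₀ * p.1 * a₁ * (q.1 * z₂ * b₂) := by rw [hfac₂]; simp [mul_assoc]
    _ = a₀ * p.1 * a₁ * z₂ * (q.2 * b₂) := by rw [h2]; simp [mul_assoc]
    _ = z * (b₀ * p.2 * b₁) * (q.2 * b₂) := by rw [key]
    _ = z * (b₀ * p.2 * b₁ * q.2 * b₂) := by simp [mul_assoc]
end
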